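/- Let λ ∈ (1/2+ℤ)^n be a dominant so(2n)-weight and T(R) ∈ D_st^λ. For each k ∈ [n−1] let f_k : D_st^λ → D_st^λ be given by f_k(T(R)) = T(R+δ^{(k1)}) if r_{k1} ≠ −r'_{k2} and r_{k1} ≠ −r'_{k+1,2} (for k = 1 the first condition is vacuous), and f_k(T(R)) = T(R−δ^{(k1)}) otherwise. For a subset A = {a_1,…,a_s} ⊆ [n−1] set f_A(T(R)) = f_{a_1}(f_{a_2}(⋯ f_{a_s}(T(R)) ⋯)) (and f_∅(T(R)) = T(R)). Then f_A(T(R)) ∈ D_st^λ for every A ⊆ [n−1], and for subsets A, B ⊆ [n−1] one has f_A(T(R)) = f_B(T(R)) if and only if A = B. -/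

import Mathlib

/-!
Each `f_k` moves only the entry `u_{k1}`, by `±1`, and the sign is read off `u_{k1}`,
`u'_{k2}`, `u'_{k+1,2}`, which no `f_j` with `j ≠ k` touches. Hence
`f_A(T(R)) = T(R + ∑_{a ∈ A} ±δ^{(a1)})` with nonzero coefficients, and `A` can be read off.

In a `D`-standard tableau the entry `u_{k1}` is constrained only by `-p ≥ u_{k1} > p` for
`p = u'_{k2}` (row `k`) and `p = u'_{k+1,2}` (row `k + 1`). Raising `u_{k1}` is allowed unless it
meets an upper bound `-p`. In that case `u_{k1} - p = 2 u_{k1}` is a positive integer, and even,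
because `λ` half-integral makes `u_{k1}` an integer; so `u_{k1} - 1` still lies strictly above
both lower bounds.
-/

open scoped BigOperators Classical

noncomputable section

namespace GTpaper

/-- `a - b ∈ ℤ≥0`, the integer-shift order `a ≥ b` on `ℂ`. -/
def IntGE (a b : ℂ) : Prop := ∃ m : ℕ, a = b + m

/-- `a - b ∈ ℤ>0`, the strict integer-shift order `a > b` on `ℂ`. -/
def IntGT (a b : ℂ) : Prop := ∃ m : ℕ, a = b + m + 1

/-- `a ∈ ℤ` as a subset of `ℂ`. -/
def IsInt (a : ℂ) : Prop := ∃ m : ℤ, a = m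

/-- `a ∈ 1/2 + ℤ` as a subset of `ℂ`. -/
def IsHalfInt (a : ℂ) : Prop := ∃ m : ℤ, a = (m : ℂ) + 1 / 2

/-- A tableau: a doubly indexed family of unprimed entries `u k i` (`ℓ_{ki}`) and primed
entries `p k i` (`ℓ'_{ki}`).  Only positions with `1 ≤ i ≤ k ≤ n` (resp. `2 ≤ i` for the primed
entries of type-`D` tableaux) are relevant; normalization predicates below set the rest to `0`. -/
structure Tab (R : Type*) where
  u : ℕ → ℕ → R
  p : ℕ → ℕ → R

instance : Add (Tab ℤ) :=
  ⟨fun a b => ⟨fun k i => a.u k i + b.u k i, fun k i => a.p k i + b.p k i⟩⟩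

instance : Neg (Tab ℤ) := ⟨fun a => ⟨fun k i => -a.u k i, fun k i => -a.p k i⟩⟩

/-- Add an integer tableau `Z` to a tableau `L`. -/
def Tab.addZ {R : Type*} [Ring R] (L : Tab R) (Z : Tab ℤ) : Tab R :=
  ⟨fun k i => L.u k i + (Z.u k i : R), fun k i => L.p k i + (Z.p k i : R)⟩

/-- `δ^{(k i)}`: the integer tableau with a single `1` at unprimed position `(k,i)`. -/
def deltaU (k i : ℕ) : Tab ℤ :=
  ⟨fun a b => if a = k ∧ b = i then 1 else 0, fun _ _ => 0⟩

/-- `δ^{(k i)'}`: the integer tableau with a single `1` at primed position `(k,i)`. -/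
def deltaP (k i : ℕ) : Tab ℤ :=
  ⟨fun _ _ => 0, fun a b => if a = k ∧ b = i then 1 else 0⟩

section Coeffs

variable {F : Type*} [Field F]

/-- `ω_k(L)`, the `k`-th component of the `C`-weight of a type-`C` tableau. -/
def wt (k : ℕ) (L : Tab F) : F :=
  2 * (∑ i ∈ Finset.Icc 1 k, L.p k i) - (∑ i ∈ Finset.Icc 1 k, L.u k i) -
    (∑ i ∈ Finset.Icc 1 (k - 1), L.u (k - 1) i) + (k : F) - 1 / 2

/-- `A_{ki}(L)`. -/
def coA (k i : ℕ) (L : Tab F) : F :=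
  ∏ a ∈ (Finset.Icc 1 k).erase i, (L.p k a - L.p k i)⁻¹

/-- `B_{ki}(L)`. -/
def coB (k i : ℕ) (L : Tab F) : F :=
  2 * coA k i L * (2 * L.p k i - 1) * (∏ a ∈ Finset.Icc 1 k, (L.u k a - L.p k i)) *
    ∏ a ∈ Finset.Icc 1 (k - 1), (L.u (k - 1) a - L.p k i)

/-- `C_{ki}(L)`. -/
def coC (k i : ℕ) (L : Tab F) : F :=
  (2 * L.u (k - 1) i - 1)⁻¹ *
    ∏ a ∈ (Finset.Icc 1 (k - 1)).erase i,
      ((L.u (k - 1) i - L.u (k - 1) a) * (L.u (k - 1) i + L.u (k - 1) a - 1))⁻¹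

/-- `D_{kijm}(L)`. -/
def coD (k i j m : ℕ) (L : Tab F) : F :=
  coA k i L * coA (k - 1) m L * coC k j L *
    (∏ a ∈ (Finset.Icc 1 k).erase i, (L.u (k - 1) j ^ 2 - L.p k a ^ 2)) *
    ∏ a ∈ (Finset.Icc 1 (k - 1)).erase m, (L.u (k - 1) j ^ 2 - L.p (k - 1) a ^ 2)

end Coeffs

/-- The `C`-weight `ω(T(L)) ∈ ℂ^n` of a type-`C` tableau. -/
def cwtv (n : ℕ) (T : Tab ℂ) : Fin n → ℂ := fun k => wt ((k : ℕ) + 1) T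

/-- A type-`C` tableau is `C`-standard (conditions (7) and (8)). -/
def IsCStandard (n : ℕ) (T : Tab ℂ) : Prop :=
  ∀ k, 1 ≤ k → k ≤ n →
    (IntGE (-(1 / 2)) (T.p k 1) ∧
      (∀ i, 1 ≤ i → i ≤ k → IntGE (T.p k i) (T.u k i)) ∧
      (∀ i, 1 ≤ i → i + 1 ≤ k → IntGT (T.u k i) (T.p k (i + 1))) ∧
      (2 ≤ k →
        (∀ i, 1 ≤ i → i ≤ k - 1 → IntGE (T.p k i) (T.u (k - 1) i)) ∧
        (∀ i, 1 ≤ i → i ≤ k - 1 → IntGT (T.u (k - 1) i) (T.p k (i + 1)))))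

/-- A type-`D` tableau is `D`-standard (conditions (5) and (6)); primed entries `p k 1`
are irrelevant. -/
def IsDStandard (n : ℕ) (T : Tab ℂ) : Prop :=
  ∀ k, 2 ≤ k → k ≤ n →
    (IntGE (-T.p k 2) (T.u k 1) ∧
      (∀ i, 2 ≤ i → i ≤ k → IntGE (T.p k i) (T.u k i)) ∧
      (∀ i, 1 ≤ i → i + 1 ≤ k → IntGT (T.u k i) (T.p k (i + 1))) ∧
      IntGE (-T.p k 2) (T.u (k - 1) 1) ∧
      (∀ i, 2 ≤ i → i ≤ k - 1 → IntGE (T.p k i) (T.u (k - 1) i)) ∧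
      (∀ i, 1 ≤ i → i ≤ k - 1 → IntGT (T.u (k - 1) i) (T.p k (i + 1))))

/-- `C`-regularity of a type-`C` tableau. -/
def IsCRegular (n : ℕ) (T : Tab ℂ) : Prop :=
  (∀ k i a, 1 ≤ i → i ≤ k → 1 ≤ a → a ≤ k → k ≤ n → i ≠ a → T.p k a ≠ T.p k i) ∧
  (∀ k i a, 1 ≤ i → i ≤ k → 1 ≤ a → a ≤ k → k ≤ n - 1 → i ≠ a → T.u k a ≠ T.u k i) ∧
  (∀ k i a, 1 ≤ i → i ≤ k → 1 ≤ a → a ≤ k → k ≤ n - 1 → i ≠ a → T.u k a + T.u k i ≠ 1) ∧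
  (∀ k i, 1 ≤ i → i ≤ k → k ≤ n - 1 → T.u k i ≠ 1 / 2)

/-- `C`-genericity of a type-`C` tableau. -/
def IsCGeneric (n : ℕ) (T : Tab ℂ) : Prop :=
  (∀ k i a, 1 ≤ i → i ≤ k → 1 ≤ a → a ≤ k → k ≤ n → i ≠ a → ¬IsInt (T.p k a - T.p k i)) ∧
  (∀ k i a, 1 ≤ i → i ≤ k → 1 ≤ a → a ≤ k → k ≤ n - 1 → i ≠ a → ¬IsInt (T.u k a - T.u k i)) ∧
  (∀ k i a, 1 ≤ i → i ≤ k → 1 ≤ a → a ≤ k → k ≤ n - 1 → ¬IsInt (T.u k a + T.u k i)) ∧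
  (∀ k i, 1 ≤ i → i ≤ k → k ≤ n - 1 → ¬IsHalfInt (T.u k i))

/-- Normalization of a type-`C` tableau: all entries outside `1 ≤ i ≤ k ≤ n` vanish. -/
def CNorm (n : ℕ) (T : Tab ℂ) : Prop :=
  (∀ k i, ¬(1 ≤ i ∧ i ≤ k ∧ k ≤ n) → T.u k i = 0) ∧
  (∀ k i, ¬(1 ≤ i ∧ i ≤ k ∧ k ≤ n) → T.p k i = 0)

/-- Normalization of a type-`D` tableau: unprimed entries outside `1 ≤ i ≤ k ≤ n` and primed
entries outside `2 ≤ i ≤ k ≤ n` vanish. -/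
def DNorm (n : ℕ) (T : Tab ℂ) : Prop :=
  (∀ k i, ¬(1 ≤ i ∧ i ≤ k ∧ k ≤ n) → T.u k i = 0) ∧
  (∀ k i, ¬(2 ≤ i ∧ i ≤ k ∧ k ≤ n) → T.p k i = 0)

/-- A dominant `so(2n)`-weight. -/
def SODominant {n : ℕ} (lam : Fin n → ℂ) : Prop :=
  (∀ i j : Fin n, (i : ℕ) + 1 = (j : ℕ) → IntGE (lam i) (lam j)) ∧
  (∀ i j : Fin n, (i : ℕ) = 0 → (j : ℕ) = 1 → IntGE (-(lam i + lam j)) 0)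

/-- `D_st^λ`: the set of (normalized) `D`-standard tableaux with top row
`ℓ_i = λ_i - i + 3/2` (`1`-based `i`). -/
def DSt (n : ℕ) (lam : Fin n → ℂ) : Set (Tab ℂ) :=
  {T | DNorm n T ∧ IsDStandard n T ∧
    ∀ i : Fin n, T.u n ((i : ℕ) + 1) = lam i - ((i : ℕ) + 1) + 3 / 2}

/-- The type-`D` tableau obtained from a type-`C` tableau by deleting the entries
`ℓ'_{11}, …, ℓ'_{n1}`. -/
def CtoD (W : Tab ℂ) : Tab ℂ := ⟨W.u, fun k i => if i = 1 then 0 else W.p k i⟩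

/-- `𝔅(μ,λ)`: type-`C` tableaux whose left-most primed column is in `μ + ℤ^n` and whose
remaining part is a `D`-standard tableau with top row `λ + ρ_D + 1/2`. -/
def TabB (n : ℕ) (mu lam : Fin n → ℂ) : Set (Tab ℂ) :=
  {W | CNorm n W ∧ (∀ k : Fin n, IsInt (W.p ((k : ℕ) + 1) 1 - mu k)) ∧ CtoD W ∈ DSt n lam}

/-- Membership of a vector of `ℂ^n` in the root lattice `Q_C = {a ∈ ℤ^n | ∑ a_i ∈ 2ℤ}`. -/
def QCvec {n : ℕ} (v : Fin n → ℂ) : Prop :=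
  ∃ q : Fin n → ℤ, (2 ∣ ∑ i, q i) ∧ ∀ i, v i = (q i : ℂ)

/-! ### The symplectic Lie algebra `sp(2n, ℂ)` -/

attribute [local instance 100] LieRing.ofAssociativeRing

/-- Index set `{1,…,n} × {±}` for rows/columns of `2n × 2n` matrices: `(k, true)` is the
positive index `k`, `(k, false)` is the negative index `-k`. -/
abbrev SpIdx (n : ℕ) := Fin n × Bool

/-- The sign of an index. -/
def sgnC {n : ℕ} (a : SpIdx n) : ℂ := if a.2 then 1 else -1

/-- `a ↦ -a` on indices. -/
def negIdx {n : ℕ} (a : SpIdx n) : SpIdx n := (a.1, !a.2)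

/-- `F_{ab} = E_{ab} - sgn(a)sgn(b) E_{-b,-a}`. -/
def Fmat (n : ℕ) (a b : SpIdx n) : Matrix (SpIdx n) (SpIdx n) ℂ :=
  Matrix.single a b 1 - Matrix.single (negIdx b) (negIdx a) (sgnC a * sgnC b)

/-- `sp(2n, ℂ)`: the Lie subalgebra of `gl(2n, ℂ)` spanned by the `F_{ab}`. -/
def sp (n : ℕ) : LieSubalgebra ℂ (Matrix (SpIdx n) (SpIdx n) ℂ) :=
  LieSubalgebra.lieSpan ℂ _ (Set.range fun x : SpIdx n × SpIdx n => Fmat n x.1 x.2)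

/-- `F_{ab}` as an element of `sp(2n, ℂ)`. -/
def spF (n : ℕ) (a b : SpIdx n) : sp n :=
  ⟨Fmat n a b, LieSubalgebra.subset_lieSpan ⟨(a, b), rfl⟩⟩

/-- The basis vector of the free module on a set `S` of tableaux attached to `L`, with the
convention that `T(L) = 0` whenever `L ∉ S`. -/
def bvec {F : Type*} [Field F] (S : Set (Tab F)) (L : Tab F) : ↥S →₀ F :=
  if h : L ∈ S then Finsupp.single ⟨L, h⟩ 1 else 0

/-- The statement that a Lie algebra homomorphism `ρ : sp(2n,ℂ) → End(V)` acts on the basis `S`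
of tableaux by the Gelfand--Tsetlin formulas (with 1-based row index `k+1` for `k : Fin n`). -/
def GTact (n : ℕ) {F : Type*} [Field F] [Algebra ℂ F] (S : Set (Tab F))
    (ρ : sp n →ₗ⁅ℂ⁆ Module.End ℂ (↥S →₀ F)) : Prop :=
  ∀ L ∈ S,
    (∀ k : Fin n,
      ρ (spF n (k, true) (k, true)) (bvec S L) = wt ((k : ℕ) + 1) L • bvec S L ∧
      ρ (spF n (k, true) (k, false)) (bvec S L) =
        ∑ i ∈ Finset.Icc 1 ((k : ℕ) + 1),
          coA ((k : ℕ) + 1) i L • bvec S (L.addZ (deltaP ((k : ℕ) + 1) i)) ∧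
      ρ (spF n (k, false) (k, true)) (bvec S L) =
        ∑ i ∈ Finset.Icc 1 ((k : ℕ) + 1),
          coB ((k : ℕ) + 1) i L • bvec S (L.addZ (-deltaP ((k : ℕ) + 1) i))) ∧
    (∀ k : Fin n, 1 ≤ (k : ℕ) →
      ρ (spF n (⟨(k : ℕ) - 1, lt_of_le_of_lt (Nat.sub_le _ _) k.isLt⟩, true) (k, false))
          (bvec S L) =
        (∑ i ∈ Finset.Icc 1 (k : ℕ),
          coC ((k : ℕ) + 1) i L • bvec S (L.addZ (-deltaU (k : ℕ) i))) +
        ∑ i ∈ Finset.Icc 1 ((k : ℕ) + 1), ∑ j ∈ Finset.Icc 1 (k : ℕ), ∑ m ∈ Finset.Icc 1 (k : ℕ),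
          coD ((k : ℕ) + 1) i j m L •
            bvec S (L.addZ (deltaP ((k : ℕ) + 1) i + deltaU (k : ℕ) j + deltaP (k : ℕ) m)))

/-- The set of tableaux `{T(L + Z)}` with `Z` an integer tableau vanishing on the unprimed
top row. -/
def orbitB {F : Type*} [Field F] (n : ℕ) (L : Tab F) : Set (Tab F) :=
  {M | ∃ Z : Tab ℤ, (∀ i, Z.u n i = 0) ∧ M = L.addZ Z}

/-- The tableau `T(W^{μ,λ})`. -/
def Wup (n : ℕ) (mu lam : Fin n → ℂ) : Tab ℂ :=
  ⟨fun k i => if h : 1 ≤ i ∧ i ≤ k ∧ k ≤ n then lam ⟨i - 1, by omega⟩ - (i : ℂ) + 3 / 2 else 0,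
   fun k i => if h : 1 ≤ i ∧ i ≤ k ∧ k ≤ n then
      (if i = 1 then mu ⟨k - 1, by omega⟩ else lam ⟨i - 1, by omega⟩ - (i : ℂ) + 3 / 2) else 0⟩

/-- The tableau `T(W_{μ,λ})`. -/
def Wlow (n : ℕ) (mu lam : Fin n → ℂ) : Tab ℂ :=
  ⟨fun k i => if h : 1 ≤ i ∧ i ≤ k ∧ k ≤ n then
      (if i = 1 then
        (if (n - k) % 2 = 0 then lam ⟨0, by omega⟩ + 1 / 2 else 1 - (lam ⟨0, by omega⟩ + 1 / 2))
       else lam ⟨i - 1, by omega⟩ - (i : ℂ) + 3 / 2) else 0,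
   fun k i => if h : 1 ≤ i ∧ i ≤ k ∧ k ≤ n then
      (if i = 1 then mu ⟨k - 1, by omega⟩ else lam ⟨i - 1, by omega⟩ - (i : ℂ) + 3 / 2) else 0⟩

/-- `𝔅_k^+(μ,λ)` for a `1`-based row index `k`. -/
def BkPlus (n : ℕ) (mu lam : Fin n → ℂ) (k : ℕ) : Set (Tab ℂ) :=
  {W | W ∈ TabB n mu lam ∧ IntGE (W.p k 1) (1 / 2)}

end GTpaper

namespace GTpaper

/-- The map `f_k` on type-`D` tableaux. -/
def fkD (k : ℕ) (R : Tab ℂ) : Tab ℂ :=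
  if (k = 1 ∨ R.u k 1 ≠ -R.p k 2) ∧ R.u k 1 ≠ -R.p (k + 1) 2
  then R.addZ (deltaU k 1) else R.addZ (-deltaU k 1)

/-- `f_A = f_{a_1} ∘ f_{a_2} ∘ ⋯ ∘ f_{a_s}` for a subset `A = {a_1 < a_2 < ⋯ < a_s}`. -/
def fAD (A : Finset ℕ) (R : Tab ℂ) : Tab ℂ := (A.sort (· ≤ ·)).foldr fkD R

/-- The constraint `-p ≥ x > p` placed on `u_{k1}` by row `k` (with `p = u'_{k2}`) and by
row `k + 1` (with `p = u'_{k+1,2}`) of a `D`-standard tableau. -/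
def InWindow (p x : ℂ) : Prop := IntGE (-p) x ∧ IntGT x p

namespace InWindow

variable {p x : ℂ}

theorem add_one (h : InWindow p x) (hx : x ≠ -p) : InWindow p (x + 1) := by
  obtain ⟨⟨m, hm⟩, ⟨m', hm'⟩⟩ := h
  cases m with
  | zero => exact absurd (by simpa using hm.symm) hx
  | succ m =>
    exact ⟨⟨m, by push_cast at hm; linear_combination hm⟩,
      ⟨m' + 1, by push_cast; linear_combination hm'⟩⟩

theorem one_le_of_eq_neg {z : ℤ} (h : InWindow p z) (hz : (z : ℂ) = -p) : 1 ≤ z := by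
  obtain ⟨m, hm⟩ := h.2
  have h2z : ((m + 1 : ℤ) : ℂ) = ((2 * z : ℤ) : ℂ) := by
    push_cast; linear_combination -hm - hz
  have := Int.cast_injective h2z
  omega

theorem sub_one {z : ℤ} (h : InWindow p z) (hz : 1 ≤ z) : InWindow p (z - 1) := by
  obtain ⟨m, hm⟩ := h.1
  obtain ⟨j, rfl⟩ : ∃ j : ℕ, z = j + 1 := ⟨(z - 1).toNat, by omega⟩
  push_cast at hm ⊢
  exact ⟨⟨m + 1, by push_cast; linear_combination hm⟩,
    ⟨m + 2 * j, by push_cast; linear_combination hm⟩⟩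

theorem isInt_add {y : ℂ} (hx : InWindow p x) (hy : InWindow p y) : IsInt (x + y) := by
  obtain ⟨m, hm⟩ := hx.1
  obtain ⟨m', hm'⟩ := hy.2
  exact ⟨m' + 1 - m, by push_cast; linear_combination hm' - hm⟩

end InWindow

namespace IsDStandard

variable {n k : ℕ} {T : Tab ℂ}

theorem inWindow_row (hT : IsDStandard n T) (h2 : 2 ≤ k) (hkn : k ≤ n) :
    InWindow (T.p k 2) (T.u k 1) :=
  ⟨(hT k h2 hkn).1, (hT k h2 hkn).2.2.1 1 le_rfl (by omega)⟩

theorem inWindow_prev_row (hT : IsDStandard n T) (h2 : 2 ≤ k) (hkn : k ≤ n) :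
    InWindow (T.p k 2) (T.u (k - 1) 1) :=
  ⟨(hT k h2 hkn).2.2.2.1, (hT k h2 hkn).2.2.2.2.2 1 le_rfl (by omega)⟩

theorem of_inWindow {T' : Tab ℂ} (hT : IsDStandard n T) (hp : T'.p = T.p)
    (hu : ∀ a b, a ≠ k ∨ b ≠ 1 → T'.u a b = T.u a b)
    (hk : 2 ≤ k → k ≤ n → InWindow (T.p k 2) (T'.u k 1))
    (hk' : k + 1 ≤ n → InWindow (T.p (k + 1) 2) (T'.u k 1)) : IsDStandard n T' := by
  intro j h2 hjn
  obtain ⟨-, c2, c3, -, c5, c6⟩ := hT j h2 hjn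
  have row : InWindow (T.p j 2) (T'.u j 1) := by
    by_cases hj : j = k
    · subst hj; exact hk h2 hjn
    · rw [hu _ _ (Or.inl hj)]; exact hT.inWindow_row h2 hjn
  have prev : InWindow (T.p j 2) (T'.u (j - 1) 1) := by
    by_cases hj : j - 1 = k
    · obtain rfl : j = k + 1 := by omega
      exact hk' hjn
    · rw [hu _ _ (Or.inl hj)]; exact hT.inWindow_prev_row h2 hjn
  rw [hp]
  refine ⟨row.1, fun i hi hij => ?_, fun i hi hij => ?_, prev.1, fun i hi hij => ?_,
    fun i hi hij => ?_⟩
  · rw [hu _ _ (Or.inr (by omega))]; exact c2 i hi hij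
  · rcases Nat.lt_or_ge i 2 with hi2 | hi2
    · obtain rfl : i = 1 := by omega
      exact row.2
    · rw [hu _ _ (Or.inr (by omega))]; exact c3 i hi hij
  · rw [hu _ _ (Or.inr (by omega))]; exact c5 i hi hij
  · rcases Nat.lt_or_ge i 2 with hi2 | hi2
    · obtain rfl : i = 1 := by omega
      exact prev.2
    · rw [hu _ _ (Or.inr (by omega))]; exact c6 i hi hij

end IsDStandard

section DSt

variable {n k : ℕ} {lam : Fin n → ℂ} {T : Tab ℂ}

theorem mem_DSt_of_inWindow {T' : Tab ℂ} (hT : T ∈ DSt n lam) (hk1 : 1 ≤ k) (hkn : k < n)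
    (hp : T'.p = T.p) (hu : ∀ a b, a ≠ k ∨ b ≠ 1 → T'.u a b = T.u a b)
    (hk : 2 ≤ k → k ≤ n → InWindow (T.p k 2) (T'.u k 1))
    (hk' : k + 1 ≤ n → InWindow (T.p (k + 1) 2) (T'.u k 1)) : T' ∈ DSt n lam := by
  obtain ⟨⟨hNu, hNp⟩, hstd, htop⟩ := hT
  refine ⟨⟨fun a b hab => ?_, fun a b hab => hp ▸ hNp a b hab⟩, hstd.of_inWindow hp hu hk hk',
    fun i => hu _ _ (Or.inl hkn.ne') ▸ htop i⟩
  rw [hu _ _ (by omega), hNu a b hab]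

theorem isInt_u_one_of_mem_DSt (hlam : ∀ i, IsHalfInt (lam i)) (hT : T ∈ DSt n lam)
    (hk1 : 1 ≤ k) (hkn : k ≤ n) : IsInt (T.u k 1) := by
  induction hkn using Nat.decreasingInduction with
  | self =>
    obtain ⟨m, hm⟩ := hlam ⟨0, by omega⟩
    refine ⟨m + 1, ?_⟩
    rw [show T.u n 1 = _ from hT.2.2 ⟨0, by omega⟩, hm]
    push_cast; ring
  | of_succ j hj ih =>
    obtain ⟨z, hz⟩ := ih (by omega)
    obtain ⟨w, hw⟩ := (hT.2.1.inWindow_row (k := j + 1) (by omega) hj).isInt_add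
      (hT.2.1.inWindow_prev_row (by omega) hj)
    exact ⟨w - z, by push_cast; simp only [Nat.add_sub_cancel] at hw; linear_combination hw - hz⟩

end DSt

theorem Tab.neg_u (Z : Tab ℤ) (k i : ℕ) : (-Z).u k i = -Z.u k i := rfl

theorem Tab.neg_p (Z : Tab ℤ) (k i : ℕ) : (-Z).p k i = -Z.p k i := rfl

def fkSign (k : ℕ) (R : Tab ℂ) : ℤ :=
  if (k = 1 ∨ R.u k 1 ≠ -R.p k 2) ∧ R.u k 1 ≠ -R.p (k + 1) 2 then 1 else -1

theorem fkSign_ne_zero (k : ℕ) (R : Tab ℂ) : fkSign k R ≠ 0 := by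
  unfold fkSign; split_ifs <;> decide

theorem fkSign_congr {k : ℕ} {R S : Tab ℂ} (hp : S.p = R.p) (hu : S.u k 1 = R.u k 1) :
    fkSign k S = fkSign k R := by
  simp only [fkSign, hp, hu]

theorem fkD_p (k : ℕ) (R : Tab ℂ) : (fkD k R).p = R.p := by
  unfold fkD; split_ifs <;> ext a b <;> simp [Tab.addZ, deltaU, Tab.neg_p]

theorem fkD_u (k : ℕ) (R : Tab ℂ) (a b : ℕ) :
    (fkD k R).u a b = R.u a b + if a = k ∧ b = 1 then (fkSign k R : ℂ) else 0 := by
  unfold fkD fkSign; split_ifs <;> simp_all [Tab.addZ, deltaU, Tab.neg_u]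

theorem fkD_mem_DSt {n k : ℕ} {lam : Fin n → ℂ} (hlam : ∀ i, IsHalfInt (lam i)) {R : Tab ℂ}
    (hR : R ∈ DSt n lam) (hk1 : 1 ≤ k) (hkn : k < n) : fkD k R ∈ DSt n lam := by
  have row : 2 ≤ k → InWindow (R.p k 2) (R.u k 1) := fun h2 => hR.2.1.inWindow_row h2 hkn.le
  have next : InWindow (R.p (k + 1) 2) (R.u k 1) :=
    hR.2.1.inWindow_prev_row (k := k + 1) (by omega) hkn
  have lowered : ¬((k = 1 ∨ R.u k 1 ≠ -R.p k 2) ∧ R.u k 1 ≠ -R.p (k + 1) 2) →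
      ∃ z : ℤ, R.u k 1 = z ∧ 1 ≤ z := by
    intro hc
    obtain ⟨z, hz⟩ := isInt_u_one_of_mem_DSt hlam hR hk1 hkn.le
    refine ⟨z, hz, ?_⟩
    rw [hz] at row next hc
    simp only [not_and_or, not_or, ne_eq, not_not] at hc
    rcases hc with ⟨hk, hq⟩ | hq
    · exact (row (by omega)).one_le_of_eq_neg hq
    · exact next.one_le_of_eq_neg hq
  refine mem_DSt_of_inWindow hR hk1 hkn (fkD_p k R) (fun a b hab => ?_) ?_ ?_
  · rw [fkD_u, if_neg (by omega), add_zero]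
  all_goals rw [fkD_u, if_pos ⟨rfl, rfl⟩, fkSign]
  all_goals split_ifs with hc <;> push_cast [← sub_eq_add_neg]
  · exact fun h2 _ => (row h2).add_one (hc.1.resolve_left (by omega))
  · obtain ⟨z, hz, hz1⟩ := lowered hc
    exact fun h2 _ => hz ▸ (hz ▸ row h2).sub_one hz1
  · exact fun _ => next.add_one hc.2
  · obtain ⟨z, hz, hz1⟩ := lowered hc
    exact fun _ => hz ▸ (hz ▸ next).sub_one hz1

theorem foldr_fkD_p (R : Tab ℂ) (l : List ℕ) : (l.foldr fkD R).p = R.p := by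
  induction l with
  | nil => rfl
  | cons k l ih => rw [List.foldr_cons, fkD_p, ih]

theorem foldr_fkD_u (R : Tab ℂ) {l : List ℕ} (hl : l.Nodup) (a b : ℕ) :
    (l.foldr fkD R).u a b = R.u a b + if a ∈ l ∧ b = 1 then (fkSign a R : ℂ) else 0 := by
  induction l generalizing a b with
  | nil => simp
  | cons k l ih =>
    obtain ⟨hkl, hl⟩ := List.nodup_cons.mp hl
    have hsign : fkSign k (l.foldr fkD R) = fkSign k R :=
      fkSign_congr (foldr_fkD_p R l) (by simp [ih hl, hkl])
    rw [List.foldr_cons, fkD_u, hsign, ih hl]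
    by_cases hab : a = k ∧ b = 1
    · obtain ⟨rfl, rfl⟩ := hab
      simp [hkl]
    · rw [if_neg hab, add_zero]
      simp only [List.mem_cons]
      grind

theorem foldr_fkD_mem_DSt {n : ℕ} {lam : Fin n → ℂ} (hlam : ∀ i, IsHalfInt (lam i))
    {R : Tab ℂ} (hR : R ∈ DSt n lam) {l : List ℕ} (hl : ∀ k ∈ l, 1 ≤ k ∧ k < n) :
    l.foldr fkD R ∈ DSt n lam := by
  induction l with
  | nil => exact hR
  | cons k l ih =>
    rw [List.forall_mem_cons] at hl
    exact fkD_mem_DSt hlam (ih hl.2) hl.1.1 hl.1.2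

theorem fAD_u_one (A : Finset ℕ) (R : Tab ℂ) (a : ℕ) :
    (fAD A R).u a 1 = R.u a 1 + if a ∈ A then (fkSign a R : ℂ) else 0 := by
  simp [fAD, foldr_fkD_u R (A.sort_nodup _)]

theorem fAD_injective (R : Tab ℂ) : Function.Injective (fAD · R) := by
  intro A B h
  ext a
  have h1 := congrArg (fun T => T.u a 1) h
  simp only [fAD_u_one, add_right_inj] at h1
  have hs : (fkSign a R : ℂ) ≠ 0 := by exact_mod_cast fkSign_ne_zero a R
  by_cases ha : a ∈ A <;> by_cases hb : a ∈ B <;> simp_all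

theorem fA_standard_and_injective_general (n : ℕ) (lam : Fin n → ℂ)
    (hlam : ∀ i, IsHalfInt (lam i))
    (R : Tab ℂ) (hR : R ∈ DSt n lam) :
    (∀ A : Finset ℕ, A ⊆ Finset.Icc 1 (n - 1) → fAD A R ∈ DSt n lam) ∧
      (∀ A B : Finset ℕ, A ⊆ Finset.Icc 1 (n - 1) → B ⊆ Finset.Icc 1 (n - 1) →
        (fAD A R = fAD B R ↔ A = B)) := by
  refine ⟨fun A hA => foldr_fkD_mem_DSt hlam hR fun k hk => ?_,
    fun A B _ _ => (fAD_injective R).eq_iff⟩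
  have := Finset.mem_Icc.mp (hA ((Finset.mem_sort _).mp hk))
  omega

/-- `f_A(T(R)) ∈ D_st^λ` for every `A ⊆ [n-1]`, and
`f_A(T(R)) = f_B(T(R))` iff `A = B`. -/
theorem fA_standard_and_injective (n : ℕ) (hn : 2 ≤ n) (lam : Fin n → ℂ)
    (hlam : ∀ i, IsHalfInt (lam i)) (hdom : SODominant lam)
    (R : Tab ℂ) (hR : R ∈ DSt n lam) :
    (∀ A : Finset ℕ, A ⊆ Finset.Icc 1 (n - 1) → fAD A R ∈ DSt n lam) ∧
      (∀ A B : Finset ℕ, A ⊆ Finset.Icc 1 (n - 1) → B ⊆ Finset.Icc 1 (n - 1) →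
        (fAD A R = fAD B R ↔ A = B)) :=
  fA_standard_and_injective_general n lam hlam R hR

end GTpaper
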